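/- arXiv:1910.00155 — 2 statements merged into one kernel-verified Lean document; each statement's English description precedes it below -/
import Mathlib

section
/- Let C and D be pretriangulated categories (each equipped with a shift by ℤ), and let F : C ⥤ D be an exact (triangulated) functor which admits a left adjoint G : D ⥤ C and a right adjoint H : D ⥤ C. Suppose Ω is a spanning class of C such that for all objects ω, ω' ∈ Ω and all integers i, the map Hom_C(ω, ω'⟦i⟧) → Hom_D(F ω, (F ω')⟦i⟧) induced by F (using the commutation isomorphism F(ω'⟦i⟧) ≅ (F ω')⟦i⟧) is bijective. Then F is fully faithful. -/
/-!
Bijectivity of `F.map` on `Hom(ω⟦j⟧, ω'⟦i⟧)` for `ω, ω' ∈ Ω` propagates to all of `C` through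
the adjunctions. Via `F ⊣ H`, bijectivity of `F.map : Hom(-, b) → Hom(F -, F b)` on the shifts
of `Ω` says that composing with the unit `b ⟶ H (F b)` is bijective on maps out of these
shifts; the cone of the unit then receives no nonzero maps from the shifts of `Ω` (long exact
`Hom`-sequence), hence vanishes, so the unit is an isomorphism and `F.map` is bijective on
`Hom(x, b)` for every `x`. The counit of `G ⊣ F` gives the dual statement in the first variable.
-/

open CategoryTheory Limits Pretriangulated Category

namespace CategoryTheory

section Functor

variable {C D : Type*} [Category C] [Category D]

lemma Functor.bijective_map_congr (F : C ⥤ D) {x y x' y' : C} (e : x ≅ x') (e' : y ≅ y') :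
    Function.Bijective (F.map : (x ⟶ y) → _) ↔
      Function.Bijective (F.map : (x' ⟶ y') → _) := by
  have hcomm : F.map ∘ e.homCongr e' = (F.mapIso e).homCongr (F.mapIso e') ∘ F.map :=
    funext (F.map_homCongr e e')
  rw [← Function.Bijective.of_comp_iff _ (e.homCongr e').bijective, hcomm,
    Function.Bijective.of_comp_iff' ((F.mapIso e).homCongr (F.mapIso e')).bijective]

lemma Functor.bijective_map_shift {A : Type*} [AddGroup A] [HasShift C A] [HasShift D A]
    (F : C ⥤ D) [F.CommShift A] {x y : C} (h : Function.Bijective (F.map : (x ⟶ y) → _))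
    (a : A) : Function.Bijective (F.map : (x⟦a⟧ ⟶ y⟦a⟧) → _) := by
  have hshift := (Functor.FullyFaithful.ofFullyFaithful (shiftFunctor C a)).map_bijective x y
  have hcomm : F.map ∘ (shiftFunctor C a).map =
      (((F.commShiftIso a).app x).homCongr ((F.commShiftIso a).app y)).symm ∘
        (shiftFunctor D a).map ∘ F.map (X := x) (Y := y) := by
    funext f
    simp [Iso.homCongr]
  rw [← Function.Bijective.of_comp_iff _ hshift, hcomm]
  exact (Equiv.bijective _).comp
    (((Functor.FullyFaithful.ofFullyFaithful _).map_bijective _ _).comp h)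

end Functor

section Adjunction

variable {C D : Type*} [Category C] [Category D] {F : C ⥤ D}

lemma Adjunction.bijective_map_iff_bijective_comp_unit_app {H : D ⥤ C} (adj : F ⊣ H)
    (x b : C) :
    Function.Bijective (F.map : (x ⟶ b) → _) ↔
      Function.Bijective (fun f : x ⟶ b => f ≫ adj.unit.app b) := by
  have hcomm :
      (fun f : x ⟶ b => f ≫ adj.unit.app b) = adj.homEquiv x (F.obj b) ∘ F.map := by
    funext f
    simp [Adjunction.homEquiv_unit]
  rw [hcomm, Function.Bijective.of_comp_iff' (adj.homEquiv _ _).bijective]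

lemma Adjunction.bijective_map_iff_bijective_counit_app_comp {G : D ⥤ C} (adj : G ⊣ F)
    (x b : C) :
    Function.Bijective (F.map : (x ⟶ b) → _) ↔
      Function.Bijective (fun f : x ⟶ b => adj.counit.app x ≫ f) := by
  have hcomm :
      (fun f : x ⟶ b => adj.counit.app x ≫ f) = (adj.homEquiv (F.obj x) b).symm ∘ F.map := by
    funext f
    simp [Adjunction.homEquiv_counit]
  rw [hcomm, Function.Bijective.of_comp_iff' (adj.homEquiv _ _).symm.bijective]

end Adjunction

namespace Pretriangulated

variable {C : Type*} [Category C] [Preadditive C] [HasZeroObject C] [HasShift C ℤ]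
  [∀ n : ℤ, (shiftFunctor C n).Additive] [Pretriangulated C]

lemma isIso_of_yoneda_map_bijective_on_shifts (Ω : Set C)
    (hΩ : ∀ a : C, (∀ ω ∈ Ω, ∀ (i : ℤ) (f : ω⟦i⟧ ⟶ a), f = 0) → IsZero a)
    {X Y : C} (u : X ⟶ Y)
    (hu : ∀ ω ∈ Ω, ∀ i : ℤ, Function.Bijective (fun f : ω⟦i⟧ ⟶ X => f ≫ u)) :
    IsIso u := by
  obtain ⟨Z, v, w, hT⟩ := distinguished_cocone_triangle u
  have h₁₂ : u ≫ v = 0 := comp_distTriang_mor_zero₁₂ _ hT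
  have h₃₁ : w ≫ u⟦(1 : ℤ)⟧' = 0 := comp_distTriang_mor_zero₃₁ _ hT
  refine (Triangle.isZero₃_iff_isIso₁ _ hT).1 (hΩ Z fun ω hω i f => ?_)
  -- Composing with `u⟦1⟧` is injective on maps out of `ω⟦i⟧ ≅ ω⟦i - 1⟧⟦1⟧`.
  have hfw : f ≫ w = 0 := by
    let e : (ω⟦i - 1⟧)⟦(1 : ℤ)⟧ ≅ ω⟦i⟧ :=
      (shiftFunctorAdd' C (i - 1) 1 i (by omega)).symm.app ω
    obtain ⟨g, hg⟩ := (shiftFunctor C (1 : ℤ)).map_surjective (e.hom ≫ f ≫ w)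
    have hgu : g ≫ u = 0 := (shiftFunctor C (1 : ℤ)).map_injective (by simp [hg, h₃₁])
    have hg0 : g = 0 := (hu ω hω (i - 1)).1 (by simpa using hgu)
    rw [← cancel_epi e.hom, comp_zero, ← hg, hg0, Functor.map_zero]
  obtain ⟨g, rfl⟩ := Triangle.coyoneda_exact₃ _ hT f hfw
  obtain ⟨g', rfl⟩ := (hu ω hω i).2 g
  change (g' ≫ u) ≫ v = 0
  rw [assoc, h₁₂, comp_zero]

lemma isIso_of_coyoneda_map_bijective_on_shifts (Ω : Set C)
    (hΩ : ∀ a : C, (∀ ω ∈ Ω, ∀ (i : ℤ) (f : a ⟶ ω⟦i⟧), f = 0) → IsZero a)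
    {X Y : C} (u : X ⟶ Y)
    (hu : ∀ ω ∈ Ω, ∀ i : ℤ, Function.Bijective (fun f : Y ⟶ ω⟦i⟧ => u ≫ f)) :
    IsIso u := by
  obtain ⟨Z, v, w, hT⟩ := distinguished_cocone_triangle u
  have h₁₂ : u ≫ v = 0 := comp_distTriang_mor_zero₁₂ _ hT
  have h₃₁ : w ≫ u⟦(1 : ℤ)⟧' = 0 := comp_distTriang_mor_zero₃₁ _ hT
  refine (Triangle.isZero₃_iff_isIso₁ _ hT).1 (hΩ Z fun ω hω i f => ?_)
  have hvf : v ≫ f = 0 := (hu ω hω i).1 (by simp [reassoc_of% h₁₂])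
  obtain ⟨g, rfl⟩ : ∃ g : X⟦(1 : ℤ)⟧ ⟶ ω⟦i⟧, f = w ≫ g :=
    Triangle.yoneda_exact₃ _ hT f hvf
  -- Maps into `ω⟦i⟧ ≅ ω⟦i - 1⟧⟦1⟧` factor through `u⟦1⟧`.
  obtain ⟨h, rfl⟩ : ∃ h : Y⟦(1 : ℤ)⟧ ⟶ ω⟦i⟧, g = u⟦(1 : ℤ)⟧' ≫ h := by
    let e : (ω⟦i - 1⟧)⟦(1 : ℤ)⟧ ≅ ω⟦i⟧ :=
      (shiftFunctorAdd' C (i - 1) 1 i (by omega)).symm.app ω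
    obtain ⟨g₀, hg₀⟩ := (shiftFunctor C (1 : ℤ)).map_surjective (g ≫ e.inv)
    obtain ⟨h₀, rfl⟩ := (hu ω hω (i - 1)).2 g₀
    refine ⟨h₀⟦(1 : ℤ)⟧' ≫ e.hom, ?_⟩
    change (u ≫ h₀)⟦(1 : ℤ)⟧' = g ≫ e.inv at hg₀
    rw [← Functor.map_comp_assoc, hg₀, assoc, e.inv_hom_id, comp_id]
  change w ≫ u⟦(1 : ℤ)⟧' ≫ h = 0
  rw [← assoc, h₃₁, zero_comp]

end Pretriangulated

section Spanning

variable {C D : Type*} [Category C] [Category D] [Preadditive C] [HasZeroObject C]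
  [HasShift C ℤ] [∀ n : ℤ, (shiftFunctor C n).Additive] [Pretriangulated C] {F : C ⥤ D}
  (Ω : Set C)

lemma Adjunction.bijective_map_of_bijective_map_from_shifts {H : D ⥤ C} (adj : F ⊣ H)
    (hΩ : ∀ a : C, (∀ ω ∈ Ω, ∀ (i : ℤ) (f : ω⟦i⟧ ⟶ a), f = 0) → IsZero a)
    {b : C} (hb : ∀ ω ∈ Ω, ∀ i : ℤ, Function.Bijective (F.map : (ω⟦i⟧ ⟶ b) → _))
    (x : C) : Function.Bijective (F.map : (x ⟶ b) → _) := by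
  have : IsIso (adj.unit.app b) :=
    isIso_of_yoneda_map_bijective_on_shifts Ω hΩ _ fun ω hω i =>
      (adj.bijective_map_iff_bijective_comp_unit_app _ _).1 (hb ω hω i)
  exact (adj.bijective_map_iff_bijective_comp_unit_app x b).2
    ((isIso_iff_yoneda_map_bijective _).1 this x)

lemma Adjunction.bijective_map_of_bijective_map_to_shifts {G : D ⥤ C} (adj : G ⊣ F)
    (hΩ : ∀ a : C, (∀ ω ∈ Ω, ∀ (i : ℤ) (f : a ⟶ ω⟦i⟧), f = 0) → IsZero a)
    {x : C} (hx : ∀ ω ∈ Ω, ∀ i : ℤ, Function.Bijective (F.map : (x ⟶ ω⟦i⟧) → _))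
    (b : C) : Function.Bijective (F.map : (x ⟶ b) → _) := by
  have : IsIso (adj.counit.app x) :=
    isIso_of_coyoneda_map_bijective_on_shifts Ω hΩ _ fun ω hω i =>
      (adj.bijective_map_iff_bijective_counit_app_comp _ _).1 (hx ω hω i)
  exact (adj.bijective_map_iff_bijective_counit_app_comp x b).2
    ((isIso_iff_coyoneda_map_bijective _).1 this b)

end Spanning

end CategoryTheory

theorem bondal_orlov_bridgeland_spanning_class_criterion_general
    {C : Type*} {D : Type*} [Category C] [Category D]
    [Preadditive C] [HasZeroObject C]
    [HasShift C ℤ] [HasShift D ℤ]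
    [∀ (n : ℤ), (CategoryTheory.shiftFunctor C n).Additive]
    [Pretriangulated C]
    (F : C ⥤ D) [F.CommShift ℤ]
    (G H : D ⥤ C) (adjG : G ⊣ F) (adjH : F ⊣ H)
    (Ω : Set C)
    (hΩ₁ : ∀ (a : C), (∀ ω ∈ Ω, ∀ (i : ℤ) (f : ω⟦i⟧ ⟶ a), f = 0) → IsZero a)
    (hΩ₂ : ∀ (a : C), (∀ ω ∈ Ω, ∀ (i : ℤ) (f : a ⟶ ω⟦i⟧), f = 0) → IsZero a)
    (hbij : ∀ ω ∈ Ω, ∀ ω' ∈ Ω, ∀ (i : ℤ),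
      Function.Bijective (fun f : ω ⟶ ω'⟦i⟧ =>
        F.map f ≫ (F.commShiftIso i).hom.app ω')) :
    F.Full ∧ F.Faithful := by
  have hΩΩ : ∀ ω ∈ Ω, ∀ ω' ∈ Ω, ∀ i j : ℤ,
      Function.Bijective (F.map : (ω⟦j⟧ ⟶ ω'⟦i⟧) → _) := by
    intro ω hω ω' hω' i j
    have h₀ : Function.Bijective (F.map : (ω ⟶ ω'⟦i - j⟧) → _) :=
      (Function.Bijective.of_comp_iff' ((isIso_iff_yoneda_map_bijective _).1 inferInstance _)
        _).1 (hbij ω hω ω' hω' (i - j))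
    exact (F.bijective_map_congr (Iso.refl _)
      ((shiftFunctorAdd' C (i - j) j i (by omega)).symm.app ω')).1 (F.bijective_map_shift h₀ j)
  have hall : ∀ x y : C, Function.Bijective (F.map : (x ⟶ y) → _) := fun x y =>
    adjH.bijective_map_of_bijective_map_from_shifts Ω hΩ₁ (fun ω hω j =>
      adjG.bijective_map_of_bijective_map_to_shifts Ω hΩ₂
        (fun ω' hω' i => hΩΩ ω hω ω' hω' i j) y) x
  obtain ⟨hF⟩ := (Functor.FullyFaithful.nonempty_iff_map_bijective F).2 hall
  exact ⟨hF.full, hF.faithful⟩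

/-- **Bridgeland's spanning class criterion for fully faithfulness.**
Let `C` and `D` be pretriangulated categories and `F : C ⥤ D` an exact (triangulated)
functor admitting a left adjoint `G` and a right adjoint `H`. If `Ω` is a spanning class
of `C` such that for all `ω, ω' ∈ Ω` and all `i : ℤ` the natural map
`Hom (ω, ω'⟦i⟧) → Hom (F ω, (F ω')⟦i⟧)` induced by `F` is bijective, then `F` is fully
faithful. -/
theorem bondal_orlov_bridgeland_spanning_class_criterion
    {C : Type*} {D : Type*} [Category C] [Category D]
    [Preadditive C] [Preadditive D] [HasZeroObject C] [HasZeroObject D]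
    [HasShift C ℤ] [HasShift D ℤ]
    [∀ (n : ℤ), (CategoryTheory.shiftFunctor C n).Additive]
    [∀ (n : ℤ), (CategoryTheory.shiftFunctor D n).Additive]
    [Pretriangulated C] [Pretriangulated D]
    (F : C ⥤ D) [F.CommShift ℤ] [F.IsTriangulated]
    (G H : D ⥤ C) (adjG : G ⊣ F) (adjH : F ⊣ H)
    (Ω : Set C)
    (hΩ₁ : ∀ (a : C), (∀ ω ∈ Ω, ∀ (i : ℤ) (f : ω⟦i⟧ ⟶ a), f = 0) → IsZero a)
    (hΩ₂ : ∀ (a : C), (∀ ω ∈ Ω, ∀ (i : ℤ) (f : a ⟶ ω⟦i⟧), f = 0) → IsZero a)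
    (hbij : ∀ ω ∈ Ω, ∀ ω' ∈ Ω, ∀ (i : ℤ),
      Function.Bijective (fun f : ω ⟶ ω'⟦i⟧ =>
        F.map f ≫ (F.commShiftIso i).hom.app ω')) :
    F.Full ∧ F.Faithful :=
  bondal_orlov_bridgeland_spanning_class_criterion_general F G H adjG adjH Ω hΩ₁ hΩ₂ hbij
end

section
/- Let k be a field, let C and D be k-linear categories, and let F : C ⥤ D and G : D ⥤ C be k-linear functors with a k-linear adjunction G ⊣ F (so the adjunction bijections Hom_C(G d, c) ≅ Hom_D(d, F c) are k-linear). Let X be an object of C such that Hom_D(F X, F X) is one-dimensional as a k-vector space and such that G(F(X)) is isomorphic to X in C. Then the counit of the adjunction at X, ε_X : G(F(X)) → X, is an isomorphism. -/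
open CategoryTheory Limits

/-- Let `k` be a field, `C`, `D` be `k`-linear categories, and `G ⊣ F` a `k`-linear
adjunction between `k`-linear functors `F : C ⥤ D` and `G : D ⥤ C`. If `X : C` is such
that `Hom_D(F X, F X)` is a one-dimensional `k`-vector space and `G (F X)` is isomorphic
to `X`, then the counit of the adjunction at `X` is an isomorphism. -/
theorem counit_isIso_of_endo_one_dimensional
    {k : Type*} [Field k] {C D : Type*} [Category C] [Category D]
    [Preadditive C] [Preadditive D] [Linear k C] [Linear k D]
    (F : C ⥤ D) (G : D ⥤ C) [F.Additive] [F.Linear k] [G.Additive] [G.Linear k]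
    (adj : G ⊣ F)
    (hlin : ∀ (d : D) (c : C), IsLinearMap k (adj.homEquiv d c))
    (X : C)
    (hdim : Module.finrank k (F.obj X ⟶ F.obj X) = 1)
    (hiso : Nonempty (G.obj (F.obj X) ≅ X)) :
    IsIso (adj.counit.app X) := by
  obtain ⟨φ⟩ := hiso
  -- the adjunction hom-equiv as a linear equivalence
  let e : (G.obj (F.obj X) ⟶ X) ≃ₗ[k] (F.obj X ⟶ F.obj X) :=
    { adj.homEquiv (F.obj X) X with
      map_add' := (hlin (F.obj X) X).1
      map_smul' := (hlin (F.obj X) X).2 }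
  have hdim' : Module.finrank k (G.obj (F.obj X) ⟶ X) = 1 := by
    rw [e.finrank_eq, hdim]
  -- the identity of F X is nonzero
  have hid : (𝟙 (F.obj X) : F.obj X ⟶ F.obj X) ≠ 0 := by
    intro h
    have : Subsingleton (F.obj X ⟶ F.obj X) := by
      constructor
      intro f g
      calc f = f ≫ 𝟙 _ := (Category.comp_id f).symm
        _ = 0 := by rw [h, Limits.comp_zero]
        _ = g ≫ 𝟙 _ := by rw [h, Limits.comp_zero]
        _ = g := Category.comp_id g
    rw [Module.finrank_zero_of_subsingleton] at hdim
    exact one_ne_zero hdim.symm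
  -- the counit at X corresponds to the identity under the hom-equiv
  have hcounit : adj.homEquiv (F.obj X) X (adj.counit.app X) = 𝟙 (F.obj X) := by
    have : (adj.homEquiv (F.obj X) X).symm (𝟙 (F.obj X)) = adj.counit.app X := by
      rw [Adjunction.homEquiv_counit, G.map_id, Category.id_comp]
    rw [← this, Equiv.apply_symm_apply]
  have hε : adj.counit.app X ≠ 0 := by
    intro h
    apply hid
    have : e (adj.counit.app X) = 𝟙 (F.obj X) := hcounit
    rw [h, map_zero] at this
    exact this.symm
  -- φ.hom is nonzero
  have hφ : φ.hom ≠ 0 := by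
    intro h
    apply hε
    calc adj.counit.app X = 𝟙 _ ≫ adj.counit.app X := (Category.id_comp _).symm
      _ = (φ.hom ≫ φ.inv) ≫ adj.counit.app X := by rw [φ.hom_inv_id]; rfl
      _ = 0 := by rw [h, Limits.zero_comp, Limits.zero_comp]
  -- in a 1-dimensional space, ε is a scalar multiple of φ.hom
  have hspan : Submodule.span k {φ.hom} = ⊤ :=
    (finrank_eq_one_iff_of_nonzero φ.hom hφ).mp hdim'
  have hmem : adj.counit.app X ∈ Submodule.span k {φ.hom} := by
    rw [hspan]; trivial
  obtain ⟨c, hc⟩ := Submodule.mem_span_singleton.mp hmem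
  have hcne : c ≠ 0 := by
    rintro rfl
    rw [zero_smul] at hc
    exact hε hc.symm
  refine ⟨c⁻¹ • φ.inv, ?_, ?_⟩
  · rw [← hc, Linear.smul_comp, Linear.comp_smul, smul_smul, mul_inv_cancel₀ hcne,
      one_smul, φ.hom_inv_id]; rfl
  · rw [← hc, Linear.smul_comp, Linear.comp_smul, smul_smul, inv_mul_cancel₀ hcne,
      one_smul, φ.inv_hom_id]; rfl
end
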